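/- For any complete lattice L, the poset 𝒦(L) of connected elements of L (with the induced order) is a chainmail, where the join of a mail in 𝒦(L) is its join computed in L. -/

import Mathlib

/-!
All members of the mail lie above a common element `b ≠ ⊥`. Given a separated cover `S` of
`⨆ M`, each member of `M`, being connected, lies below some block of `S`; two such blocks
both contain `b`, so they meet nontrivially and hence coincide. Thus all of `M`, and with it
`⨆ M`, lies below a single block.
-/

variable {L : Type*} [CompleteLattice L]

def Separated (S : Set L) : Prop :=
  (⊥ : L) ∉ S ∧ ∀ s ∈ S, ∀ t ∈ S, s ≠ t → s ⊓ t = ⊥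

def Connected (a : L) : Prop :=
  ∀ S : Set L, Separated S → a ≤ sSup S → ∃ s ∈ S, a ≤ s

theorem Separated.empty : Separated (∅ : Set L) :=
  ⟨Set.notMem_empty _, by simp⟩

theorem Connected.ne_bot {a : L} (ha : Connected a) : a ≠ ⊥ := by
  rintro rfl
  obtain ⟨s, hs, -⟩ := ha ∅ Separated.empty (by simp)
  exact hs

theorem Separated.eq_of_le_of_le {S : Set L} (hS : Separated S) {b s t : L} (hb : b ≠ ⊥)
    (hs : s ∈ S) (ht : t ∈ S) (hbs : b ≤ s) (hbt : b ≤ t) : s = t := by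
  by_contra hst
  exact hb (le_bot_iff.mp (hS.2 s hs t ht hst ▸ le_inf hbs hbt))

theorem connected_sSup_of_le {M : Set L} (hne : M.Nonempty) (hconn : ∀ a ∈ M, Connected a)
    {b : L} (hb : b ≠ ⊥) (hblb : ∀ a ∈ M, b ≤ a) : Connected (sSup M) := by
  intro S hS hle
  have cover : ∀ a ∈ M, ∃ s ∈ S, a ≤ s := fun a ha =>
    hconn a ha S hS ((le_sSup ha).trans hle)
  obtain ⟨a₀, ha₀⟩ := hne
  obtain ⟨s₀, hs₀, ha₀s₀⟩ := cover a₀ ha₀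
  refine ⟨s₀, hs₀, sSup_le fun a ha => ?_⟩
  obtain ⟨s, hs, has⟩ := cover a ha
  have hss₀ : s = s₀ :=
    hS.eq_of_le_of_le hb hs hs₀ ((hblb a ha).trans has) ((hblb a₀ ha₀).trans ha₀s₀)
  exact hss₀ ▸ has

theorem connected_elements_chainmail
    (M : Set L) (hne : M.Nonempty) (hconn : ∀ a ∈ M, Connected a)
    (hlb : ∃ b : L, Connected b ∧ ∀ a ∈ M, b ≤ a) :
    Connected (sSup M) ∧ (∀ a ∈ M, a ≤ sSup M) ∧
      ∀ u : L, Connected u → (∀ a ∈ M, a ≤ u) → sSup M ≤ u := by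
  obtain ⟨b, hb, hblb⟩ := hlb
  exact ⟨connected_sSup_of_le hne hconn hb.ne_bot hblb, fun _ => le_sSup,
    fun _ _ => sSup_le⟩
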